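/- Let F₁ : Ω → H₁ and F₂ : Ω → H₂ be Bessel mappings with transform operators θ₁, θ₂, and let θ be the transform operator of the Bessel mapping F₁ ⊕ F₂ : Ω → H₁ ⊕ H₂. Then: (1) for every g ∈ L²(Ω, 𝕜), θ* g = (θ₁* g, θ₂* g); (2) for every (u, v) ∈ H₁ ⊕ H₂, θ (u, v) = θ₁ u + θ₂ v in L²(Ω, 𝕜); (3) the frame operator S = θ* ∘ θ of F₁ ⊕ F₂ satisfies S (u, v) = (θ₁*θ₁ u + θ₁*θ₂ v, θ₂*θ₂ v + θ₂*θ₁ u) for all (u, v) ∈ H₁ ⊕ H₂. -/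

import Mathlib

/-!
Pointwise, `⟪(F₁ ω, F₂ ω), (u, v)⟫ = ⟪F₁ ω, u⟫ + ⟪F₂ ω, v⟫`, so `θ (u, v) = θ₁ u + θ₂ v` in `L²`.
Pairing `θ* g` against `(u, v)` and moving the adjoints across turns this identity into
`θ* g = (θ₁* g, θ₂* g)`, and the formula for `θ* θ` is the composite of the two.
-/

open MeasureTheory ContinuousLinearMap

/-- `F : Ω → H` is a Bessel mapping for `H` with bound `B` (with respect to `μ`). -/
def IsBesselMapping {𝕜 : Type*} [RCLike 𝕜] [MeasurableSpace 𝕜] [BorelSpace 𝕜]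
    {H : Type*} [NormedAddCommGroup H] [InnerProductSpace 𝕜 H]
    {Ω : Type*} [MeasurableSpace Ω] (μ : Measure Ω) (F : Ω → H) (B : ℝ) : Prop :=
  ∀ u : H, Measurable (fun ω => (inner 𝕜 (F ω) u : 𝕜)) ∧
    ∫ ω, ‖(inner 𝕜 (F ω) u : 𝕜)‖ ^ 2 ∂μ ≤ B * ‖u‖ ^ 2

section Adjoint

variable {𝕜 E₁ E₂ G : Type*} [RCLike 𝕜]
  [NormedAddCommGroup E₁] [InnerProductSpace 𝕜 E₁] [CompleteSpace E₁]
  [NormedAddCommGroup E₂] [InnerProductSpace 𝕜 E₂] [CompleteSpace E₂]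
  [NormedAddCommGroup G] [InnerProductSpace 𝕜 G] [CompleteSpace G]

theorem adjoint_apply_eq_toLp_of_apply_toLp_eq_add {A : WithLp 2 (E₁ × E₂) →L[𝕜] G}
    {A₁ : E₁ →L[𝕜] G} {A₂ : E₂ →L[𝕜] G}
    (hA : ∀ u v, A (WithLp.toLp 2 (u, v)) = A₁ u + A₂ v) (g : G) :
    adjoint A g = WithLp.toLp 2 (adjoint A₁ g, adjoint A₂ g) := by
  refine ext_inner_left 𝕜 fun x => ?_
  obtain ⟨u, v⟩ := x
  rw [adjoint_inner_right, hA, inner_add_left, WithLp.prod_inner_apply,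
    adjoint_inner_right, adjoint_inner_right]

end Adjoint

def IsTransformOperator {𝕜 H Ω : Type*} [RCLike 𝕜] [NormedAddCommGroup H]
    [InnerProductSpace 𝕜 H] [MeasurableSpace Ω] (μ : Measure Ω) (F : Ω → H)
    (θ : H →L[𝕜] Lp 𝕜 2 μ) : Prop :=
  ∀ u, (θ u : Ω → 𝕜) =ᵐ[μ] fun ω => inner 𝕜 (F ω) u

theorem IsTransformOperator.apply_toLp_prod {𝕜 H₁ H₂ Ω : Type*} [RCLike 𝕜]
    [NormedAddCommGroup H₁] [InnerProductSpace 𝕜 H₁]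
    [NormedAddCommGroup H₂] [InnerProductSpace 𝕜 H₂] [MeasurableSpace Ω] {μ : Measure Ω}
    {F₁ : Ω → H₁} {F₂ : Ω → H₂} {θ₁ : H₁ →L[𝕜] Lp 𝕜 2 μ} {θ₂ : H₂ →L[𝕜] Lp 𝕜 2 μ}
    {θ : WithLp 2 (H₁ × H₂) →L[𝕜] Lp 𝕜 2 μ}
    (hθ₁ : IsTransformOperator μ F₁ θ₁) (hθ₂ : IsTransformOperator μ F₂ θ₂)
    (hθ : IsTransformOperator μ (fun ω => WithLp.toLp 2 (F₁ ω, F₂ ω)) θ) (u : H₁) (v : H₂) :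
    θ (WithLp.toLp 2 (u, v)) = θ₁ u + θ₂ v := by
  refine Lp.ext ?_
  filter_upwards [hθ (WithLp.toLp 2 (u, v)), Lp.coeFn_add (θ₁ u) (θ₂ v), hθ₁ u, hθ₂ v]
    with ω hω hadd hω₁ hω₂
  rw [hω, hadd, Pi.add_apply, hω₁, hω₂, WithLp.prod_inner_apply]

theorem prod_bessel_operators
    {𝕜 : Type*} [RCLike 𝕜]
    {H₁ : Type*} [NormedAddCommGroup H₁] [InnerProductSpace 𝕜 H₁] [CompleteSpace H₁]
    {H₂ : Type*} [NormedAddCommGroup H₂] [InnerProductSpace 𝕜 H₂] [CompleteSpace H₂]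
    {Ω : Type*} [MeasurableSpace Ω] {μ : Measure Ω}
    (F₁ : Ω → H₁) (F₂ : Ω → H₂)
    (θ₁ : H₁ →L[𝕜] Lp 𝕜 2 μ)
    (hθ₁ : ∀ u : H₁, (θ₁ u : Ω → 𝕜) =ᵐ[μ] fun ω => (inner 𝕜 (F₁ ω) u : 𝕜))
    (θ₂ : H₂ →L[𝕜] Lp 𝕜 2 μ)
    (hθ₂ : ∀ v : H₂, (θ₂ v : Ω → 𝕜) =ᵐ[μ] fun ω => (inner 𝕜 (F₂ ω) v : 𝕜))
    (θ : WithLp 2 (H₁ × H₂) →L[𝕜] Lp 𝕜 2 μ)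
    (hθ : ∀ x : WithLp 2 (H₁ × H₂), (θ x : Ω → 𝕜) =ᵐ[μ]
      fun ω => (inner 𝕜 ((WithLp.equiv 2 (H₁ × H₂)).symm (F₁ ω, F₂ ω)) x : 𝕜)) :
    (∀ g : Lp 𝕜 2 μ, ContinuousLinearMap.adjoint θ g =
      (WithLp.equiv 2 (H₁ × H₂)).symm
        (ContinuousLinearMap.adjoint θ₁ g, ContinuousLinearMap.adjoint θ₂ g)) ∧
    (∀ (u : H₁) (v : H₂),
      θ ((WithLp.equiv 2 (H₁ × H₂)).symm (u, v)) = θ₁ u + θ₂ v) ∧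
    (∀ (u : H₁) (v : H₂),
      ContinuousLinearMap.adjoint θ (θ ((WithLp.equiv 2 (H₁ × H₂)).symm (u, v))) =
        (WithLp.equiv 2 (H₁ × H₂)).symm
          (ContinuousLinearMap.adjoint θ₁ (θ₁ u) + ContinuousLinearMap.adjoint θ₁ (θ₂ v),
           ContinuousLinearMap.adjoint θ₂ (θ₂ v) + ContinuousLinearMap.adjoint θ₂ (θ₁ u))) := by
  have hθ_apply := IsTransformOperator.apply_toLp_prod hθ₁ hθ₂ hθ
  have hθ_adjoint := adjoint_apply_eq_toLp_of_apply_toLp_eq_add hθ_apply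
  refine ⟨hθ_adjoint, hθ_apply, fun u v => ?_⟩
  rw [WithLp.equiv_symm_apply, hθ_apply, hθ_adjoint, map_add, map_add,
    add_comm (adjoint θ₂ (θ₁ u))]
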